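/- arXiv:1812.03831 — 4 statements merged into one kernel-verified Lean document; each statement's English description precedes it below -/
import Mathlib

section
/- For the canonical instance of a self-join-free CQ Q1 in which each variable is tagged with its own name (each tuple in R_i^I is the tuple of pairs (c_j, v_j) where v_j is the j-th variable of the unique atom with symbol R_i), any conjunctive query Q_i that has a homomorphism into this instance induces a body-homomorphism from Q_i to Q1. -/
/-- The canonical tagged instance `σ(I)` of a CQ with body `B1`: each value in position
`j` of a tuple of relation `R` is tagged with the variable in position `j` of an atom of
`B1` with symbol `R`; symbols without an atom in `B1` get empty relations. -/
def sigmaInst {V1 S D : Type*} (ar : S → ℕ)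
    (B1 : Set (Σ R : S, Fin (ar R) → V1))
    (I : ∀ R : S, Set (Fin (ar R) → D)) :
    ∀ R : S, Set (Fin (ar R) → D × V1) :=
  fun R => {t | ∃ v : Fin (ar R) → V1, (⟨R, v⟩ : Σ R : S, Fin (ar R) → V1) ∈ B1 ∧
    ∃ s ∈ I R, t = fun j => (s j, v j)}

/-- for a self-join-free `Q1` with body `B1`, any homomorphism `μ` of a
body `B2` into the tagged instance `σ(I)` induces (via second components) a
body-homomorphism from `B2` to `B1`. -/
theorem stmt_5 {V1 V2 S D : Type*} (ar : S → ℕ)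
    (B1 : Set (Σ R : S, Fin (ar R) → V1))
    (hsjf : ∀ a ∈ B1, ∀ b ∈ B1, a.1 = b.1 → a = b)
    (I : ∀ R : S, Set (Fin (ar R) → D))
    (B2 : Set (Σ R : S, Fin (ar R) → V2))
    (μ : V2 → D × V1)
    (hμ : ∀ a ∈ B2, (fun j => μ (a.2 j)) ∈ sigmaInst ar B1 I a.1) :
    ∀ a ∈ B2, (⟨a.1, fun j => (μ (a.2 j)).2⟩ : Σ R : S, Fin (ar R) → V1) ∈ B1 := by
  intro a ha
  obtain ⟨v, hv, s, hs, ht⟩ := hμ a ha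
  have : (fun j => (μ (a.2 j)).2) = v := by
    funext j
    have := congrFun ht j
    simp [this]
  rw [this]
  exact hv
end

section
/- Contraction preserves the join-tree property: let T be a join tree of a hypergraph, and A_1, …, A_s a path in T with s ≥ 3. If for some j we have A_j ∩ A_{j+1} ⊆ A_1 ∩ A_s, then the graph obtained by removing edge (A_j, A_{j+1}) and adding edge (A_1, A_s) is again a join tree (the running intersection property still holds). -/
/-!
Deleting the edge `A j — A (j+1)` of the tree separates `A 0` from `A (s-1)`: the edge is a
bridge, and the two halves of the path survive the deletion. Hence adding the edge
`A 0 — A (s-1)` yields a tree again. A walk of `T` through nodes containing `v` is rerouted in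
`T'` by replacing the deleted edge with the detour `A j, …, A 0, A (s-1), …, A (j+1)`. The
detour is needed only when `v ∈ A j ∩ A (j+1) ⊆ A 0 ∩ A (s-1)`, and then `v` lies in every
`A k`, since in a tree the path between two nodes lies inside every walk between them.
-/

open SimpleGraph

namespace SimpleGraph

variable {ι : Type*} {G : SimpleGraph ι}

theorem exists_walk_support_eq_map_range' {A : ℕ → ι} {a b : ℕ} (hab : a ≤ b)
    (hadj : ∀ k, a ≤ k → k < b → G.Adj (A k) (A (k + 1))) :
    ∃ w : G.Walk (A a) (A b), w.support = (List.range' a (b + 1 - a)).map A := by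
  induction b, hab using Nat.le_induction with
  | base => exact ⟨.nil, by simp⟩
  | succ b hab ih =>
    obtain ⟨w, hw⟩ := ih fun k hak hkb => hadj k hak (by omega)
    refine ⟨w.concat (hadj b hab (by omega)), ?_⟩
    rw [Walk.support_concat, hw, show b + 1 + 1 - a = b + 1 - a + 1 by omega, List.range'_concat,
      List.map_append]
    simp only [List.map_cons, List.map_nil]
    congr 3
    omega

theorem IsAcyclic.support_subset_of_isPath (hG : G.IsAcyclic) {u v : ι} {p : G.Walk u v}
    (hp : p.IsPath) (q : G.Walk u v) : p.support ⊆ q.support := by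
  classical
  have hqp : q.bypass = p :=
    congrArg Subtype.val ((hG.subsingleton_path u v).elim ⟨_, q.bypass_isPath⟩ ⟨p, hp⟩)
  exact hqp ▸ q.support_bypass_subset_support

theorem IsAcyclic.apply_mem_of_walk {S : Set ι} (hG : G.IsAcyclic) {A : ℕ → ι} {a b : ℕ}
    (hab : a ≤ b) (hinj : Set.InjOn A (Set.Icc a b))
    (hadj : ∀ k, a ≤ k → k < b → G.Adj (A k) (A (k + 1)))
    (q : G.Walk (A a) (A b)) (hq : ∀ z ∈ q.support, z ∈ S) {k : ℕ} (hak : a ≤ k) (hkb : k ≤ b) :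
    A k ∈ S := by
  obtain ⟨p, hp⟩ := exists_walk_support_eq_map_range' hab hadj
  have hpath : p.IsPath := by
    rw [Walk.isPath_def, hp]
    refine (List.nodup_range' _).map_on fun x hx y hy hxy => hinj ?_ ?_ hxy <;> grind
  refine hq _ (hG.support_subset_of_isPath hpath q ?_)
  rw [hp]
  exact List.mem_map_of_mem (List.mem_range'_1.2 ⟨hak, by omega⟩)

theorem Walk.exists_walk_support_subset_of_adj {H : SimpleGraph ι} {S : Set ι}
    (h : ∀ x y, G.Adj x y → x ∈ S → y ∈ S → ∃ q : H.Walk x y, ∀ z ∈ q.support, z ∈ S) :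
    ∀ {u v : ι} (p : G.Walk u v), (∀ z ∈ p.support, z ∈ S) →
      ∃ q : H.Walk u v, ∀ z ∈ q.support, z ∈ S
  | _, _, .nil, hp => ⟨.nil, hp⟩
  | _, _, .cons hxy p, hp => by
    simp only [Walk.support_cons, List.mem_cons, forall_eq_or_imp] at hp
    obtain ⟨q, hq⟩ := exists_walk_support_subset_of_adj h p hp.2
    obtain ⟨r, hr⟩ := h _ _ hxy hp.1 (hp.2 _ p.start_mem_support)
    exact ⟨r.append q, fun z hz => ((Walk.mem_support_append_iff r q).1 hz).elim (hr z) (hq z)⟩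

theorem Walk.exists_walk_deleteEdges_sup_of_detour {K : SimpleGraph ι} {S : Set ι} {a b : ι}
    (hdetour : a ∈ S → b ∈ S →
      ∃ d : (G.deleteEdges {s(a, b)} ⊔ K).Walk a b, ∀ z ∈ d.support, z ∈ S)
    {u v : ι} (p : G.Walk u v) (hp : ∀ z ∈ p.support, z ∈ S) :
    ∃ q : (G.deleteEdges {s(a, b)} ⊔ K).Walk u v, ∀ z ∈ q.support, z ∈ S := by
  refine p.exists_walk_support_subset_of_adj (fun x y hxy hx hy => ?_) hp
  by_cases he : s(x, y) = s(a, b)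
  · rcases Sym2.eq_iff.1 he with ⟨rfl, rfl⟩ | ⟨rfl, rfl⟩
    · exact hdetour hx hy
    · obtain ⟨d, hd⟩ := hdetour hy hx
      exact ⟨d.reverse, by simpa using hd⟩
  · have hadj : (G.deleteEdges {s(a, b)} ⊔ K).Adj x y := Or.inl (deleteEdges_adj.2 ⟨hxy, he⟩)
    exact ⟨hadj.toWalk, by simp [hx, hy]⟩

section Chain

variable {s j : ℕ} {A : ℕ → ι}

theorem mk_apply_succ_ne_of_injOn (hinj : Set.InjOn A (Set.Iio s)) {k : ℕ} (hk : k + 1 < s)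
    (hj : j + 1 < s) (hkj : k ≠ j) : s(A k, A (k + 1)) ≠ s(A j, A (j + 1)) := by
  rw [Ne, Sym2.eq_iff]
  rintro (⟨h, -⟩ | ⟨h₁, h₂⟩)
  · exact hkj (hinj (Set.mem_Iio.2 (by omega)) (Set.mem_Iio.2 (by omega)) h)
  · have := hinj (Set.mem_Iio.2 (by omega)) (Set.mem_Iio.2 (by omega)) h₁
    have := hinj (Set.mem_Iio.2 (by omega)) (Set.mem_Iio.2 (by omega)) h₂
    omega

variable (hinj : Set.InjOn A (Set.Iio s)) (hadj : ∀ k, k + 1 < s → G.Adj (A k) (A (k + 1)))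
  (hj : j + 1 < s)
include hinj hadj hj

theorem exists_walk_deleteEdges_of_injOn {a b : ℕ} (hab : a ≤ b) (hbs : b < s)
    (hjab : ∀ k, a ≤ k → k < b → k ≠ j) :
    ∃ w : (G.deleteEdges {s(A j, A (j + 1))}).Walk (A a) (A b),
      w.support = (List.range' a (b + 1 - a)).map A :=
  exists_walk_support_eq_map_range' hab fun k hak hkb =>
    deleteEdges_adj.2
      ⟨hadj k (by omega), mk_apply_succ_ne_of_injOn hinj (by omega) hj (hjab k hak hkb)⟩

theorem not_reachable_deleteEdges_of_isAcyclic (hG : G.IsAcyclic) :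
    ¬ (G.deleteEdges {s(A j, A (j + 1))}).Reachable (A 0) (A (s - 1)) := by
  intro h
  obtain ⟨w₁, -⟩ := exists_walk_deleteEdges_of_injOn hinj hadj hj (Nat.zero_le j) (by omega)
    (fun k _ hk => hk.ne)
  obtain ⟨w₂, -⟩ := exists_walk_deleteEdges_of_injOn hinj hadj hj (a := j + 1) (b := s - 1)
    (by omega) (by omega) (fun k hk _ => by omega)
  exact isBridge_iff.1 (isAcyclic_iff_forall_adj_isBridge.1 hG (hadj j hj))
    ((Walk.reachable w₁.reverse).trans (h.trans w₂.reverse.reachable))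

theorem exists_walk_deleteEdges_sup_edge :
    ∃ d : (G.deleteEdges {s(A j, A (j + 1))} ⊔ edge (A 0) (A (s - 1))).Walk (A j) (A (j + 1)),
      ∀ z ∈ d.support, ∃ k < s, A k = z := by
  obtain ⟨w₁, hw₁⟩ := exists_walk_deleteEdges_of_injOn hinj hadj hj (Nat.zero_le j) (by omega)
    (fun k _ hk => hk.ne)
  obtain ⟨w₂, hw₂⟩ := exists_walk_deleteEdges_of_injOn hinj hadj hj (a := j + 1) (b := s - 1)
    (by omega) (by omega) (fun k hk _ => by omega)
  have hne : A 0 ≠ A (s - 1) := fun h => by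
    have := hinj (Set.mem_Iio.2 (by omega)) (Set.mem_Iio.2 (by omega)) h
    omega
  have hedge : (edge (A 0) (A (s - 1))).Adj (A 0) (A (s - 1)) := by simp [edge_adj, hne]
  refine ⟨(w₁.reverse.mapLe le_sup_left).append
    (.cons (Or.inr hedge) (w₂.reverse.mapLe le_sup_left)), fun z hz => ?_⟩
  simp only [Walk.mem_support_append_iff, Walk.support_cons, List.mem_cons,
    Walk.support_mapLe_eq_support, Walk.support_reverse, List.mem_reverse, hw₁, hw₂,
    List.mem_map, List.mem_range'_1] at hz
  rcases hz with ⟨k, hk, rfl⟩ | rfl | ⟨k, hk, rfl⟩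
  · exact ⟨k, by omega, rfl⟩
  · exact ⟨0, by omega, rfl⟩
  · exact ⟨k, by omega, rfl⟩

theorem apply_mem_of_isAcyclic_of_mem (hG : G.IsAcyclic) {S : Set ι}
    (hS : ∀ x y, x ∈ S → y ∈ S → ∃ p : G.Walk x y, ∀ z ∈ p.support, z ∈ S)
    (h₀ : A 0 ∈ S) (hj₀ : A j ∈ S) (hj₁ : A (j + 1) ∈ S) (hs : A (s - 1) ∈ S)
    {k : ℕ} (hk : k < s) : A k ∈ S := by
  have hinj' {a b : ℕ} (hb : b < s) : Set.InjOn A (Set.Icc a b) :=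
    hinj.mono fun x hx => Set.mem_Iio.2 (hx.2.trans_lt hb)
  rcases le_or_gt k j with hkj | hkj
  · obtain ⟨q, hq⟩ := hS _ _ h₀ hj₀
    exact hG.apply_mem_of_walk (Nat.zero_le j) (hinj' (by omega))
      (fun k _ hk => hadj k (by omega)) q hq (Nat.zero_le k) hkj
  · obtain ⟨q, hq⟩ := hS _ _ hj₁ hs
    exact hG.apply_mem_of_walk (by omega) (hinj' (by omega))
      (fun k _ hk => hadj k (by omega)) q hq hkj (by omega)

end Chain

end SimpleGraph

theorem stmt_7_general {V ι : Type*} (label : ι → Set V) (T : SimpleGraph ι)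
    (hT : T.IsTree)
    (hjoin : ∀ (v : V) (i j : ι), v ∈ label i → v ∈ label j →
      ∃ p : T.Walk i j, ∀ x ∈ p.support, v ∈ label x)
    (s : ℕ) (A : ℕ → ι)
    (hinj : ∀ i j, i < s → j < s → A i = A j → i = j)
    (hadj : ∀ i, i + 1 < s → T.Adj (A i) (A (i + 1)))
    (j : ℕ) (hj : j + 1 < s)
    (hsub : label (A j) ∩ label (A (j + 1)) ⊆ label (A 0) ∩ label (A (s - 1))) :
    ∀ T' : SimpleGraph ι,
      T' = (T.deleteEdges {s(A j, A (j + 1))}) ⊔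
             SimpleGraph.fromEdgeSet {s(A 0, A (s - 1))} →
      T'.IsTree ∧ ∀ (v : V) (i i' : ι), v ∈ label i → v ∈ label i' →
        ∃ p : T'.Walk i i', ∀ x ∈ p.support, v ∈ label x := by
  rintro _ rfl
  have hinj' : Set.InjOn A (Set.Iio s) := fun i hi k hk => hinj i k hi hk
  obtain ⟨d, hd⟩ := exists_walk_deleteEdges_sup_edge hinj' hadj hj
  refine ⟨⟨(connected_iff _).2 ⟨fun x y => ?_, hT.connected.nonempty⟩, ?_⟩,
    fun v i i' hvi hvi' => ?_⟩
  · obtain ⟨q, -⟩ := (hT.connected.preconnected x y).some.exists_walk_deleteEdges_sup_of_detour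
      (S := Set.univ) (fun _ _ => ⟨d, by simp⟩) (by simp)
    exact ⟨q⟩
  · exact (hT.isAcyclic.anti (deleteEdges_le _)).sup_edge_of_not_reachable
      (not_reachable_deleteEdges_of_isAcyclic hinj' hadj hj hT.isAcyclic)
  · obtain ⟨p, hp⟩ := hjoin v i i' hvi hvi'
    refine p.exists_walk_deleteEdges_sup_of_detour (S := {x | v ∈ label x})
      (fun hvj hvj₁ => ⟨d, fun z hz => ?_⟩) hp
    obtain ⟨k, hk, rfl⟩ := hd z hz
    obtain ⟨hv₀, hvs⟩ := hsub ⟨hvj, hvj₁⟩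
    exact apply_mem_of_isAcyclic_of_mem hinj' hadj hj hT.isAcyclic (hjoin v) hv₀ hvj hvj₁ hvs hk

/-- contraction preserves the join-tree property. Given a join tree `T`
(for labels `label`), a path `A 0, …, A (s-1)` in `T` with `s ≥ 3`, and an index `j`
with `label (A j) ∩ label (A (j+1)) ⊆ label (A 0) ∩ label (A (s-1))`, the graph
obtained by deleting the edge `(A j, A (j+1))` and adding the edge `(A 0, A (s-1))`
is again a tree satisfying the running intersection property. -/
theorem stmt_7 {V ι : Type*} (label : ι → Set V) (T : SimpleGraph ι)
    (hT : T.IsTree)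
    (hjoin : ∀ (v : V) (i j : ι), v ∈ label i → v ∈ label j →
      ∃ p : T.Walk i j, ∀ x ∈ p.support, v ∈ label x)
    (s : ℕ) (hs : 3 ≤ s) (A : ℕ → ι)
    (hinj : ∀ i j, i < s → j < s → A i = A j → i = j)
    (hadj : ∀ i, i + 1 < s → T.Adj (A i) (A (i + 1)))
    (j : ℕ) (hj : j + 1 < s)
    (hsub : label (A j) ∩ label (A (j + 1)) ⊆ label (A 0) ∩ label (A (s - 1))) :
    ∀ T' : SimpleGraph ι,
      T' = (T.deleteEdges {s(A j, A (j + 1))}) ⊔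
             SimpleGraph.fromEdgeSet {s(A 0, A (s - 1))} →
      T'.IsTree ∧ ∀ (v : V) (i i' : ι), v ∈ label i → v ∈ label i' →
        ∃ p : T'.Walk i i', ∀ x ∈ p.support, v ∈ label x :=
  stmt_7_general label T hT hjoin s A hinj hadj j hj hsub
end

section
/- The running intersection property holds for the guard tree: the tree of triples defined recursively (root (a₀,b₀,c₀); node (a,b,c) has children (a,j,b) when b>a+1 and (b,j',c) when c>b+1, with a<j<b and b<j'<c) is a join tree of the hypergraph whose hyperedges are its node-triples: for every index i, the set of nodes whose triple contains i forms a connected subtree. -/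
/-- `q` is a legal child of `p` in the guard tree of triples. -/
def IsChild (p q : ℕ × ℕ × ℕ) : Prop :=
  (q.1 = p.1 ∧ q.2.2 = p.2.1 ∧ p.1 < q.2.1 ∧ q.2.1 < p.2.1) ∨
  (q.1 = p.2.1 ∧ q.2.2 = p.2.2 ∧ p.2.1 < q.2.1 ∧ q.2.1 < p.2.2)

/-- `n` is one of the three indices of the triple `t`. -/
def InTriple (n : ℕ) (t : ℕ × ℕ × ℕ) : Prop :=
  n = t.1 ∨ n = t.2.1 ∨ n = t.2.2

/-!
Write `[a, c]` for the span of a triple `(a, b, c)`. Spans shrink down the tree, and the two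
children of a node have spans `[a, b]` and `[b, c]`, which share only the endpoint `b`. Hence if
`n` lies strictly inside the span of a node `i`, every node whose span contains `n` is an ancestor
or a descendant of `i`, and no proper ancestor of `i` contains `n`.

Going up from a node containing `n` while the parent still contains `n` ends at a highest node
containing `n`: the root, or a node whose parent misses `n`, in which case `n` is its middle
index and so lies strictly inside its span. By the above, two highest nodes are comparable and
therefore equal, so any two nodes containing `n` are joined through this common top.
-/

open Relation Set

theorem InTriple.mem_Icc {n : ℕ} {t : ℕ × ℕ × ℕ} (ht : t.1 < t.2.1 ∧ t.2.1 < t.2.2)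
    (h : InTriple n t) : n ∈ Icc t.1 t.2.2 := by
  rw [Set.mem_Icc]
  rcases h with rfl | rfl | rfl <;> omega

namespace IsChild

variable {p q : ℕ × ℕ × ℕ} {n : ℕ}

theorem bounds (hp : p.1 < p.2.1 ∧ p.2.1 < p.2.2) (h : IsChild p q) :
    p.1 ≤ q.1 ∧ q.2.2 ≤ p.2.2 := by
  rcases h with h | h <;> omega

theorem mem_Ioo_of_not_inTriple (h : IsChild p q) (hq : InTriple n q) (hp : ¬ InTriple n p) :
    n ∈ Ioo q.1 q.2.2 := by
  simp only [InTriple, not_or] at hq hp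
  rw [mem_Ioo]
  rcases h with h | h <;> omega

theorem not_inTriple_of_mem_Ioo (hp : p.1 < p.2.1 ∧ p.2.1 < p.2.2) (h : IsChild p q)
    (hn : n ∈ Ioo q.1 q.2.2) : ¬ InTriple n p := by
  simp only [InTriple, mem_Ioo] at hn ⊢
  rcases h with h | h <;> omega

theorem not_mem_Icc_of_mem_Ioo {q' : ℕ × ℕ × ℕ} (h : IsChild p q) (h' : IsChild p q')
    (hne : q.2.2 ≠ q'.2.2) (hn : n ∈ Ioo q.1 q.2.2) : n ∉ Icc q'.1 q'.2.2 := by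
  simp only [mem_Ioo, mem_Icc] at hn ⊢
  rcases h with h | h <;> rcases h' with h' | h' <;> omega

end IsChild

namespace GuardTree

variable {ι : Type*} {triple : ι → ℕ × ℕ × ℕ} {r : ι} {parent : ι → ι}

/-- `ReflTransGen (ChildOf r parent) i j` says that `j` is an ancestor of `i`. -/
def ChildOf (r : ι) (parent : ι → ι) (c p : ι) : Prop :=
  c ≠ r ∧ parent c = p

def IsHighest (triple : ι → ℕ × ℕ × ℕ) (r : ι) (parent : ι → ι) (n : ℕ) (t : ι) :
    Prop :=
  InTriple n (triple t) ∧ (t = r ∨ ¬ InTriple n (triple (parent t)))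

theorem parent_ne_self (hreach : ∀ i, ∃ n : ℕ, parent^[n] i = r) {i : ι} (hi : i ≠ r) :
    parent i ≠ i := fun h =>
  let ⟨k, hk⟩ := hreach i
  hi ((Function.iterate_fixed h k).symm.trans hk)

theorem reflTransGen_root (hreach : ∀ i, ∃ n : ℕ, parent^[n] i = r) (i : ι) :
    ReflTransGen (ChildOf r parent) i r := by
  obtain ⟨k, hk⟩ := hreach i
  induction k generalizing i with
  | zero => exact hk ▸ .refl
  | succ k ih =>
    by_cases hi : i = r
    · exact hi ▸ .refl
    · exact .head ⟨hi, rfl⟩ (ih (parent i) hk)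

theorem bounds_of_reflTransGen
    (hinc : ∀ i, (triple i).1 < (triple i).2.1 ∧ (triple i).2.1 < (triple i).2.2)
    (hchild : ∀ i, i ≠ r → IsChild (triple (parent i)) (triple i))
    {i j : ι} (h : ReflTransGen (ChildOf r parent) i j) :
    (triple j).1 ≤ (triple i).1 ∧ (triple i).2.2 ≤ (triple j).2.2 := by
  induction h with
  | refl => exact ⟨le_rfl, le_rfl⟩
  | tail _ hcp ih =>
    obtain ⟨hc, rfl⟩ := hcp
    have := (hchild _ hc).bounds (hinc _)
    omega

theorem not_inTriple_of_transGen
    (hinc : ∀ i, (triple i).1 < (triple i).2.1 ∧ (triple i).2.1 < (triple i).2.2)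
    (hchild : ∀ i, i ≠ r → IsChild (triple (parent i)) (triple i))
    {i j : ι} {n : ℕ} (h : TransGen (ChildOf r parent) i j)
    (hn : n ∈ Ioo (triple i).1 (triple i).2.2) : ¬ InTriple n (triple j) := by
  obtain ⟨c, hic, hc, rfl⟩ := TransGen.tail'_iff.mp h
  have := bounds_of_reflTransGen hinc hchild hic
  refine (hchild c hc).not_inTriple_of_mem_Ioo (hinc _) ?_
  simp only [mem_Ioo] at hn ⊢
  omega

theorem reflTransGen_or_reflTransGen (hreach : ∀ i, ∃ n : ℕ, parent^[n] i = r)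
    (hinc : ∀ i, (triple i).1 < (triple i).2.1 ∧ (triple i).2.1 < (triple i).2.2)
    (hchild : ∀ i, i ≠ r → IsChild (triple (parent i)) (triple i))
    (hside : ∀ i j, i ≠ r → j ≠ r → parent i = parent j →
      (triple i).2.2 = (triple j).2.2 → i = j)
    {i j : ι} {n : ℕ} (hi : n ∈ Ioo (triple i).1 (triple i).2.2)
    (hj : n ∈ Icc (triple j).1 (triple j).2.2) :
    ReflTransGen (ChildOf r parent) i j ∨ ReflTransGen (ChildOf r parent) j i := by
  have hir := reflTransGen_root hreach i
  revert hi
  induction hir using ReflTransGen.head_induction_on with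
  | refl => exact fun _ => .inr (reflTransGen_root hreach j)
  | @head i _ hip _ ih =>
    intro hi
    obtain ⟨hir, rfl⟩ := hip
    have hpi := (hchild _ hir).bounds (hinc _)
    rcases ih (by simp only [mem_Ioo] at hi ⊢; omega) with h | h
    · exact .inl (.head ⟨hir, rfl⟩ h)
    rcases h.cases_tail with rfl | ⟨c, hjc, hcr, hcp⟩
    · exact .inl (.single ⟨hir, rfl⟩)
    by_cases hci : c = i
    · exact .inr (hci ▸ hjc)
    -- `c` and `i` are distinct children of `parent i`, so they lie on opposite sides of it.
    have hne : (triple i).2.2 ≠ (triple c).2.2 := fun h => hci (hside c i hcr hir hcp h.symm)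
    have hjc := bounds_of_reflTransGen hinc hchild hjc
    refine absurd ?_ ((hchild i hir).not_mem_Icc_of_mem_Ioo (hcp ▸ hchild c hcr) hne hi)
    simp only [mem_Icc] at hj ⊢
    omega

theorem eq_of_isHighest_of_reflTransGen
    (hinc : ∀ i, (triple i).1 < (triple i).2.1 ∧ (triple i).2.1 < (triple i).2.2)
    (hchild : ∀ i, i ≠ r → IsChild (triple (parent i)) (triple i))
    {i j : ι} {n : ℕ} (hi : IsHighest triple r parent n i) (hj : InTriple n (triple j))
    (h : ReflTransGen (ChildOf r parent) i j) : i = j := by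
  rcases reflTransGen_iff_eq_or_transGen.mp h with rfl | h
  · rfl
  obtain ⟨c, ⟨hir, -⟩, -⟩ := TransGen.head'_iff.mp h
  have hn := (hchild i hir).mem_Ioo_of_not_inTriple hi.1 (hi.2.resolve_left hir)
  exact absurd hj (not_inTriple_of_transGen hinc hchild h hn)

theorem IsHighest.unique (hreach : ∀ i, ∃ n : ℕ, parent^[n] i = r)
    (hinc : ∀ i, (triple i).1 < (triple i).2.1 ∧ (triple i).2.1 < (triple i).2.2)
    (hchild : ∀ i, i ≠ r → IsChild (triple (parent i)) (triple i))
    (hside : ∀ i j, i ≠ r → j ≠ r → parent i = parent j →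
      (triple i).2.2 = (triple j).2.2 → i = j)
    {i j : ι} {n : ℕ} (hi : IsHighest triple r parent n i) (hj : IsHighest triple r parent n j) :
    i = j := by
  by_cases hir : i = r
  · subst hir
    exact (eq_of_isHighest_of_reflTransGen hinc hchild hj hi.1 (reflTransGen_root hreach j)).symm
  have hn := (hchild i hir).mem_Ioo_of_not_inTriple hi.1 (hi.2.resolve_left hir)
  rcases reflTransGen_or_reflTransGen hreach hinc hchild hside hn (hj.1.mem_Icc (hinc j))
    with h | h
  · exact eq_of_isHighest_of_reflTransGen hinc hchild hi hj.1 h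
  · exact (eq_of_isHighest_of_reflTransGen hinc hchild hj hi.1 h).symm

theorem exists_walk_to_isHighest (hreach : ∀ i, ∃ n : ℕ, parent^[n] i = r) {n : ℕ} {i : ι}
    (hi : InTriple n (triple i)) :
    ∃ t, IsHighest triple r parent n t ∧
      ∃ p : (SimpleGraph.fromRel fun x y => parent x = y).Walk i t,
        ∀ x ∈ p.support, InTriple n (triple x) := by
  have hir := reflTransGen_root hreach i
  revert hi
  induction hir using ReflTransGen.head_induction_on with
  | refl => exact fun hi => ⟨r, ⟨hi, .inl rfl⟩, .nil, by simpa using hi⟩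
  | @head i _ hip _ ih =>
    intro hi
    obtain ⟨hir, rfl⟩ := hip
    by_cases hpi : InTriple n (triple (parent i))
    · obtain ⟨t, ht, p, hp⟩ := ih hpi
      have hadj : (SimpleGraph.fromRel fun x y => parent x = y).Adj i (parent i) :=
        SimpleGraph.fromRel_adj _ _ _ |>.mpr ⟨(parent_ne_self hreach hir).symm, .inl rfl⟩
      refine ⟨t, ht, .cons hadj p, fun x hx => ?_⟩
      rcases List.mem_cons.mp (SimpleGraph.Walk.support_cons hadj p ▸ hx) with rfl | hx
      exacts [hi, hp x hx]
    · exact ⟨i, ⟨hi, .inr hpi⟩, .nil, by simpa using hi⟩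

end GuardTree

theorem stmt_12_general {ι : Type*} (triple : ι → ℕ × ℕ × ℕ) (r : ι) (parent : ι → ι)
    (hreach : ∀ i : ι, ∃ n : ℕ, parent^[n] i = r)
    (hinc : ∀ i : ι, (triple i).1 < (triple i).2.1 ∧ (triple i).2.1 < (triple i).2.2)
    (hchild : ∀ i : ι, i ≠ r → IsChild (triple (parent i)) (triple i))
    (hside : ∀ i j : ι, i ≠ r → j ≠ r → parent i = parent j →
      (triple i).2.2 = (triple j).2.2 → i = j)
    (T : SimpleGraph ι) (hT : T = SimpleGraph.fromRel fun x y => parent x = y) :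
    ∀ (n : ℕ) (i j : ι), InTriple n (triple i) → InTriple n (triple j) →
      ∃ p : T.Walk i j, ∀ x ∈ p.support, InTriple n (triple x) := by
  subst hT
  intro n i j hi hj
  obtain ⟨t, ht, p, hp⟩ := GuardTree.exists_walk_to_isHighest hreach hi
  obtain ⟨t', ht', q, hq⟩ := GuardTree.exists_walk_to_isHighest hreach hj
  obtain rfl := ht.unique hreach hinc hchild hside ht'
  refine ⟨p.append q.reverse, fun x hx => ?_⟩
  rw [SimpleGraph.Walk.mem_support_append_iff, SimpleGraph.Walk.support_reverse,
    List.mem_reverse] at hx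
  exact hx.elim (hp x) (hq x)

/-- the guard tree (given by a rooted parent structure whose edges
respect the child rule and with at most one child per side) satisfies the running
intersection property: for every index `n`, the set of nodes whose triple contains
`n` is connected in the tree. -/
theorem stmt_12 {ι : Type*} (triple : ι → ℕ × ℕ × ℕ) (r : ι) (parent : ι → ι)
    (hroot : parent r = r)
    (hreach : ∀ i : ι, ∃ n : ℕ, parent^[n] i = r)
    (hinc : ∀ i : ι, (triple i).1 < (triple i).2.1 ∧ (triple i).2.1 < (triple i).2.2)
    (hchild : ∀ i : ι, i ≠ r → IsChild (triple (parent i)) (triple i))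
    (hside : ∀ i j : ι, i ≠ r → j ≠ r → parent i = parent j →
      (triple i).2.2 = (triple j).2.2 → i = j)
    (T : SimpleGraph ι) (hT : T = SimpleGraph.fromRel fun x y => parent x = y) :
    ∀ (n : ℕ) (i j : ι), InTriple n (triple i) → InTriple n (triple j) →
      ∃ p : T.Walk i j, ∀ x ∈ p.support, InTriple n (triple x) :=
  stmt_12_general triple r parent hreach hinc hchild hside T hT
end

section
/- Every consecutive pair is realized in the guard tree: in the recursive tree of triples with root (0, j, k+1), for every 1 ≤ i ≤ k+1 there is a node (a, b, c) of the tree with {i−1, i} ⊆ {a, b, c}. -/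
theorem stmt_13_aux (N : Set (ℕ × ℕ × ℕ))
    (hleft : ∀ v ∈ N, v.1 + 1 < v.2.1 →
      ∃ t, v.1 < t ∧ t < v.2.1 ∧ (v.1, t, v.2.1) ∈ N)
    (hright : ∀ v ∈ N, v.2.1 + 1 < v.2.2 →
      ∃ t, v.2.1 < t ∧ t < v.2.2 ∧ (v.2.1, t, v.2.2) ∈ N)
    (i : ℕ) (hi1 : 1 ≤ i) :
    ∀ n a b c, c - a ≤ n → (a, b, c) ∈ N → a < b → b < c → a ≤ i - 1 → i ≤ c →
      ∃ v ∈ N, (i - 1 = v.1 ∨ i - 1 = v.2.1 ∨ i - 1 = v.2.2) ∧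
        (i = v.1 ∨ i = v.2.1 ∨ i = v.2.2) := by
  intro n
  induction n with
  | zero => intro a b c hn _ hab hbc ha hc; omega
  | succ n ih =>
    intro a b c hn hN hab hbc ha hc
    by_cases hib : i ≤ b
    · rcases eq_or_lt_of_le (Nat.succ_le_of_lt hab) with hb | hb
      · refine ⟨(a, b, c), hN, ?_, ?_⟩ <;> simp <;> omega
      · obtain ⟨t, hat, htb, htN⟩ := hleft (a, b, c) hN hb
        exact ih a t b (by omega) htN hat htb ha hib
    · rcases eq_or_lt_of_le (Nat.succ_le_of_lt hbc) with hc' | hc'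
      · refine ⟨(a, b, c), hN, ?_, ?_⟩ <;> simp <;> omega
      · obtain ⟨t, hbt, htc, htN⟩ := hright (a, b, c) hN hc'
        exact ih b t c (by omega) htN hbt htc (by omega) hc

/-- in the recursive tree of triples with root `(0, j, k+1)` (the node
set `N` contains the root and is closed under the existence of left and right
children), every consecutive pair `{i-1, i}` with `1 ≤ i ≤ k+1` is contained in the
triple of some node. -/
theorem stmt_13 (k j : ℕ) (hj0 : 0 < j) (hjk : j < k + 1)
    (N : Set (ℕ × ℕ × ℕ))
    (hroot : (0, j, k + 1) ∈ N)
    (hleft : ∀ v ∈ N, v.1 + 1 < v.2.1 →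
      ∃ t, v.1 < t ∧ t < v.2.1 ∧ (v.1, t, v.2.1) ∈ N)
    (hright : ∀ v ∈ N, v.2.1 + 1 < v.2.2 →
      ∃ t, v.2.1 < t ∧ t < v.2.2 ∧ (v.2.1, t, v.2.2) ∈ N) :
    ∀ i : ℕ, 1 ≤ i → i ≤ k + 1 →
      ∃ v ∈ N, (i - 1 = v.1 ∨ i - 1 = v.2.1 ∨ i - 1 = v.2.2) ∧
        (i = v.1 ∨ i = v.2.1 ∨ i = v.2.2) := by
  intro i hi1 hik
  exact stmt_13_aux N hleft hright i hi1 (k + 1) 0 j (k + 1) (by omega) hroot hj0 hjk (by omega) hik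
end
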